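/- arXiv:2004.06316 — 2 statements merged into one kernel-verified Lean document; each statement's English description precedes it below -/
import Mathlib

section
/- For the symmetric similarity measure d(i,j) = [i ≠ j] on 3 classes, and the parametrized categorical distribution p_W = (1/3 − W, 1/3, 1/3 + W) on {1,2,3} with W ∈ [0, 1/3], the triplet-comparison probability ∑_{i=1}^3 p_W(i)² · (1 − p_W(i)) equals 2/9 for every W ∈ [0, 1/3]. -/
theorem triplet_comparison_nonidentifiable (W : ℝ) (hW : W ∈ Set.Icc (0 : ℝ) (1 / 3)) :
    (∑ i : Fin 3, (![1 / 3 - W, 1 / 3, 1 / 3 + W] i) ^ 2 *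
        (1 - ![1 / 3 - W, 1 / 3, 1 / 3 + W] i)) = 2 / 9 := by
  simp [Fin.sum_univ_three]
  ring
end

section
/- Let Z₁, Z₂, Z₃ be independent Gumbel random variables with location parameters α₁, α₂, α₃ and common scale β > 0, and write s_i = exp(α_i/β). Then P(Z₁ > Z₂ > Z₃) = (s₁/(s₁+s₂+s₃)) · (s₂/(s₂+s₃)); equivalently, P(Z₁ > Z₂ > Z₃) = P(Z₁ > max(Z₂, Z₃)) · P(Z₂ > Z₃). -/
/-!
With the weight `s = exp (α / β)`, the Gumbel distribution function is `x ↦ exp (-s e^{-x/β})`.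
Such functions multiply by adding weights, so the maximum of independent Gumbel variables is
Gumbel with the summed weight, and integrating the distribution function of `Y` against the
density of `X` gives `P(Y < X) = s_X / (s_X + s_Y)`. Hence `P(Z₀ > max (Z₁, Z₂))` equals
`s₀ / (s₀ + s₁ + s₂)`, and `P(Z₀ > Z₁ > Z₂) = P(Z₁ > Z₂) - P(Z₁ > max (Z₀, Z₂))`: ties do not
matter because the same formula holds for `P(Y ≤ X)`.
-/

open MeasureTheory ProbabilityTheory Real Filter Set Topology

section DerivNonneg

variable {g g' : ℝ → ℝ} {l m : ℝ}

theorem integrableOn_Iio_deriv_of_nonneg (hderiv : ∀ x, HasDerivAt g (g' x) x)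
    (hg' : ∀ x, 0 ≤ g' x) (hg : Tendsto g atBot (𝓝 l)) (a : ℝ) : IntegrableOn g' (Iio a) := by
  have hneg : IntegrableOn (fun x => g' (-x)) (Ioi (-a)) := by
    refine integrableOn_Ioi_deriv_of_nonneg' (g := fun x => -g (-x)) (l := -l)
      (fun x _ => ?_) (fun x _ => hg' (-x)) ?_
    · simpa [Function.comp_def, Pi.neg_def] using ((hderiv (-x)).scomp x (hasDerivAt_neg x)).neg
    · exact (hg.comp tendsto_neg_atTop_atBot).neg
  simpa using hneg.comp_neg_Iio

theorem integrable_deriv_of_nonneg (hderiv : ∀ x, HasDerivAt g (g' x) x)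
    (hg' : ∀ x, 0 ≤ g' x) (hbot : Tendsto g atBot (𝓝 l)) (htop : Tendsto g atTop (𝓝 m)) :
    Integrable g' := by
  rw [← integrableOn_univ, ← Iio_union_Ici (a := (0 : ℝ))]
  exact (integrableOn_Iio_deriv_of_nonneg hderiv hg' hbot 0).union
    ((integrableOn_Ici_iff_integrableOn_Ioi enorm_ne_top).2
      (integrableOn_Ioi_deriv_of_nonneg' (fun x _ => hderiv x) (fun x _ => hg' x) htop))

end DerivNonneg

noncomputable section

/-- Distribution function of Gumbel(α, β) for the weight `c = exp (α / β)`. -/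
def gumbelCDF (β c x : ℝ) : ℝ := exp (-(c * exp (-x / β)))

def gumbelPDF (β c x : ℝ) : ℝ := c / β * exp (-x / β) * gumbelCDF β c x

def gumbelMeasure (β c : ℝ) : Measure ℝ :=
  volume.withDensity fun x => ENNReal.ofReal (gumbelPDF β c x)

end

section GumbelFunctions

variable {β c a : ℝ}

theorem gumbelCDF_mul_gumbelCDF (β a b x : ℝ) :
    gumbelCDF β a x * gumbelCDF β b x = gumbelCDF β (a + b) x := by
  simp only [gumbelCDF, ← exp_add]
  ring_nf

theorem gumbelPDF_mul_gumbelCDF (hca : c + a ≠ 0) (x : ℝ) :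
    gumbelPDF β c x * gumbelCDF β a x = c / (c + a) * gumbelPDF β (c + a) x := by
  simp only [gumbelPDF, mul_assoc, gumbelCDF_mul_gumbelCDF]
  field_simp

theorem hasDerivAt_gumbelCDF (β c x : ℝ) : HasDerivAt (gumbelCDF β c) (gumbelPDF β c x) x := by
  have h : HasDerivAt (fun y => -y / β) (-1 / β) x := by
    simpa using (hasDerivAt_id x).neg.div_const β
  refine (h.exp.const_mul c).neg.exp.congr_deriv ?_
  simp only [gumbelPDF, gumbelCDF, Pi.neg_apply]
  ring

theorem gumbelPDF_nonneg (hβ : 0 < β) (hc : 0 ≤ c) (x : ℝ) : 0 ≤ gumbelPDF β c x := by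
  unfold gumbelPDF gumbelCDF
  positivity

theorem tendsto_gumbelCDF_atTop (hβ : 0 < β) (c : ℝ) :
    Tendsto (gumbelCDF β c) atTop (𝓝 1) := by
  have h : Tendsto (fun x => exp (-x / β)) atTop (𝓝 0) :=
    tendsto_exp_atBot.comp (tendsto_neg_atTop_atBot.atBot_div_const hβ)
  unfold gumbelCDF
  simpa [Function.comp_def] using (continuous_exp.tendsto _).comp (h.const_mul c).neg

theorem tendsto_gumbelCDF_atBot (hβ : 0 < β) (hc : 0 < c) :
    Tendsto (gumbelCDF β c) atBot (𝓝 0) := by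
  have h : Tendsto (fun x => exp (-x / β)) atBot atTop :=
    tendsto_exp_atTop.comp (tendsto_neg_atBot_atTop.atTop_div_const hβ)
  exact tendsto_exp_atBot.comp (tendsto_neg_atTop_atBot.comp (h.const_mul_atTop hc))

theorem integrable_gumbelPDF (hβ : 0 < β) (hc : 0 < c) : Integrable (gumbelPDF β c) :=
  integrable_deriv_of_nonneg (hasDerivAt_gumbelCDF β c) (gumbelPDF_nonneg hβ hc.le)
    (tendsto_gumbelCDF_atBot hβ hc) (tendsto_gumbelCDF_atTop hβ c)

theorem integral_gumbelPDF (hβ : 0 < β) (hc : 0 < c) : ∫ x, gumbelPDF β c x = 1 := by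
  simpa using integral_of_hasDerivAt_of_tendsto (hasDerivAt_gumbelCDF β c)
    (integrable_gumbelPDF hβ hc) (tendsto_gumbelCDF_atBot hβ hc) (tendsto_gumbelCDF_atTop hβ c)

theorem gumbelMeasure_Iic (hβ : 0 < β) (hc : 0 < c) (x : ℝ) :
    gumbelMeasure β c (Iic x) = ENNReal.ofReal (gumbelCDF β c x) := by
  rw [gumbelMeasure, withDensity_apply _ measurableSet_Iic,
    ← ofReal_integral_eq_lintegral_ofReal (integrable_gumbelPDF hβ hc).integrableOn
      (ae_of_all _ (gumbelPDF_nonneg hβ hc.le)),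
    integral_Iic_of_hasDerivAt_of_tendsto' (fun y _ => hasDerivAt_gumbelCDF β c y)
      (integrable_gumbelPDF hβ hc).integrableOn (tendsto_gumbelCDF_atBot hβ hc), sub_zero]

theorem integral_gumbelCDF_gumbelMeasure (hβ : 0 < β) (hc : 0 < c) (ha : 0 ≤ a) :
    ∫ x, gumbelCDF β a x ∂gumbelMeasure β c = c / (c + a) := by
  have hca : 0 < c + a := by positivity
  rw [gumbelMeasure, integral_withDensity_eq_integral_toReal_smul
    (by unfold gumbelPDF gumbelCDF; fun_prop)
    (ae_of_all _ fun _ => ENNReal.ofReal_lt_top)]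
  simp only [ENNReal.toReal_ofReal (gumbelPDF_nonneg hβ hc.le _), smul_eq_mul,
    gumbelPDF_mul_gumbelCDF hca.ne', integral_const_mul, integral_gumbelPDF hβ hca, mul_one]

end GumbelFunctions

theorem ProbabilityTheory.IndepFun.measure_prodMk_preimage {Ω α γ : Type*} [MeasurableSpace Ω]
    [MeasurableSpace α] [MeasurableSpace γ] {P : Measure Ω} [IsFiniteMeasure P]
    {X : Ω → α} {Y : Ω → γ} (h : IndepFun X Y P) (hX : Measurable X) (hY : Measurable Y)
    {s : Set (α × γ)} (hs : MeasurableSet s) :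
    P ((fun ω => (X ω, Y ω)) ⁻¹' s) = ∫⁻ x, P.map Y (Prod.mk x ⁻¹' s) ∂P.map X := by
  rw [← Measure.map_apply (hX.prodMk hY) hs,
    (indepFun_iff_map_prod_eq_prod_map_map hX.aemeasurable hY.aemeasurable).1 h,
    Measure.prod_apply hs]

theorem ProbabilityTheory.iIndepFun.indepFun_max {Ω ι : Type*} [MeasurableSpace Ω]
    {P : Measure Ω} {Z : ι → Ω → ℝ} (h : iIndepFun Z P) (hZ : ∀ i, Measurable (Z i))
    {i j k : ι} (hij : i ≠ j) (hik : i ≠ k) :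
    IndepFun (Z i) (fun ω => max (Z j ω) (Z k ω)) P :=
  ((h.indepFun_prodMk hZ j k i hij.symm hik.symm).comp
    (measurable_fst.max measurable_snd) measurable_id).symm

theorem measureReal_lt_and_lt_eq_sub {Ω : Type*} [MeasurableSpace Ω] {P : Measure Ω}
    [IsFiniteMeasure P] {X Y W : Ω → ℝ} (hX : Measurable X) (hY : Measurable Y)
    (hW : Measurable W)
    (hties : P.real {ω | max (Y ω) (W ω) ≤ X ω} = P.real {ω | max (Y ω) (W ω) < X ω}) :
    P.real {ω | X ω < Y ω ∧ W ω < X ω} =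
      P.real {ω | W ω < X ω} - P.real {ω | max (Y ω) (W ω) < X ω} := by
  set B := {ω | Y ω ≤ X ω ∧ W ω < X ω}
  have hB : P.real B = P.real {ω | max (Y ω) (W ω) < X ω} := by
    refine le_antisymm ?_ (measureReal_mono fun ω hω => ?_)
    · rw [← hties]
      exact measureReal_mono fun ω hω => max_le hω.1 hω.2.le
    · exact ⟨(le_max_left _ _).trans hω.le, (le_max_right _ _).trans_lt hω⟩
  have hsplit : {ω | W ω < X ω} = {ω | X ω < Y ω ∧ W ω < X ω} ∪ B := by
    ext ω
    constructor
    · intro hω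
      rcases lt_or_ge (X ω) (Y ω) with hXY | hYX
      exacts [Or.inl ⟨hXY, hω⟩, Or.inr ⟨hYX, hω⟩]
    · rintro (hω | hω) <;> exact hω.2
  have hdisj : Disjoint {ω | X ω < Y ω ∧ W ω < X ω} B :=
    disjoint_left.2 fun ω hω hω' => (hω.1.trans_le hω'.1).false
  rw [hsplit, measureReal_union hdisj ((measurableSet_le hY hX).inter (measurableSet_lt hW hX)),
    hB, add_sub_cancel_right]

section GumbelLaws

variable {Ω : Type*} [MeasurableSpace Ω] {P : Measure Ω} {X Y : Ω → ℝ} {β a c : ℝ}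

theorem map_eq_gumbelMeasure [IsFiniteMeasure P] (hβ : 0 < β) (hc : 0 < c) (hX : Measurable X)
    (hFX : ∀ x, P.real {ω | X ω ≤ x} = gumbelCDF β c x) : P.map X = gumbelMeasure β c := by
  refine Measure.ext_of_Iic _ _ fun x => ?_
  rw [Measure.map_apply hX measurableSet_Iic, gumbelMeasure_Iic hβ hc, ← hFX, ofReal_measureReal]
  rfl

theorem ProbabilityTheory.IndepFun.measureReal_le_of_gumbelCDF [IsFiniteMeasure P]
    (h : IndepFun X Y P) (hβ : 0 < β) (hc : 0 < c) (ha : 0 < a)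
    (hX : Measurable X) (hY : Measurable Y)
    (hFX : ∀ x, P.real {ω | X ω ≤ x} = gumbelCDF β c x)
    (hFY : ∀ x, P.real {ω | Y ω ≤ x} = gumbelCDF β a x) :
    P.real {ω | Y ω ≤ X ω} = c / (c + a) := by
  have hP : P {ω | Y ω ≤ X ω} = ∫⁻ x, ENNReal.ofReal (gumbelCDF β a x) ∂gumbelMeasure β c :=
    calc P {ω | Y ω ≤ X ω} = ∫⁻ x, P.map Y (Iic x) ∂P.map X :=
          h.measure_prodMk_preimage hX hY (measurableSet_le measurable_snd measurable_fst)
      _ = _ := by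
          simp only [map_eq_gumbelMeasure hβ hc hX hFX, map_eq_gumbelMeasure hβ ha hY hFY,
            gumbelMeasure_Iic hβ ha]
  rw [measureReal_def, hP, ← integral_eq_lintegral_of_nonneg_ae (f := gumbelCDF β a)
    (ae_of_all _ fun x => (exp_pos _).le) (by unfold gumbelCDF; fun_prop),
    integral_gumbelCDF_gumbelMeasure hβ hc ha.le]

theorem ProbabilityTheory.IndepFun.measureReal_lt_of_gumbelCDF [IsProbabilityMeasure P]
    (h : IndepFun X Y P) (hβ : 0 < β) (hc : 0 < c) (ha : 0 < a)
    (hX : Measurable X) (hY : Measurable Y)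
    (hFX : ∀ x, P.real {ω | X ω ≤ x} = gumbelCDF β c x)
    (hFY : ∀ x, P.real {ω | Y ω ≤ x} = gumbelCDF β a x) :
    P.real {ω | Y ω < X ω} = c / (c + a) := by
  have hcompl : {ω | Y ω < X ω} = {ω | X ω ≤ Y ω}ᶜ := by ext; simp
  rw [hcompl, probReal_compl_eq_one_sub (measurableSet_le hX hY),
    h.symm.measureReal_le_of_gumbelCDF hβ ha hc hY hX hFY hFX]
  field_simp
  ring

theorem ProbabilityTheory.IndepFun.measureReal_max_le_of_gumbelCDF {W : Ω → ℝ}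
    (h : IndepFun Y W P) (hFY : ∀ x, P.real {ω | Y ω ≤ x} = gumbelCDF β a x)
    (hFW : ∀ x, P.real {ω | W ω ≤ x} = gumbelCDF β c x) (x : ℝ) :
    P.real {ω | max (Y ω) (W ω) ≤ x} = gumbelCDF β (a + c) x := by
  have hset : {ω | max (Y ω) (W ω) ≤ x} = Y ⁻¹' Iic x ∩ W ⁻¹' Iic x := by ext; simp
  rw [hset, measureReal_def, h.measure_inter_preimage_eq_mul _ _ measurableSet_Iic
    measurableSet_Iic, ENNReal.toReal_mul, ← gumbelCDF_mul_gumbelCDF, ← hFY, ← hFW]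
  rfl

end GumbelLaws

theorem gumbel_plackett_luce
    {Ω : Type*} [MeasureSpace Ω] [IsProbabilityMeasure (ℙ : Measure Ω)]
    (Z : Fin 3 → Ω → ℝ) (α : Fin 3 → ℝ) (β : ℝ) (hβ : 0 < β)
    (hmeas : ∀ i, Measurable (Z i))
    (hindep : iIndepFun Z ℙ)
    (hcdf : ∀ i z, (ℙ {ω | Z i ω ≤ z}).toReal = exp (-exp (-(z - α i) / β)))
    (s : Fin 3 → ℝ) (hs : ∀ i, s i = exp (α i / β)) :
    (ℙ {ω | Z 0 ω > Z 1 ω ∧ Z 1 ω > Z 2 ω}).toReal =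
        (s 0 / (s 0 + s 1 + s 2)) * (s 1 / (s 1 + s 2)) ∧
      (ℙ {ω | Z 0 ω > Z 1 ω ∧ Z 1 ω > Z 2 ω}).toReal =
        (ℙ {ω | Z 0 ω > max (Z 1 ω) (Z 2 ω)}).toReal *
          (ℙ {ω | Z 1 ω > Z 2 ω}).toReal := by
  have hspos : ∀ i, 0 < s i := fun i => hs i ▸ exp_pos _
  have hF : ∀ i x, volume.real {ω | Z i ω ≤ x} = gumbelCDF β (s i) x := fun i x => by
    rw [measureReal_def, hcdf, gumbelCDF, hs, ← exp_add]
    congr 3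
    field_simp
    ring
  have hmax : ∀ {j k}, j ≠ k → ∀ x,
      volume.real {ω | max (Z j ω) (Z k ω) ≤ x} = gumbelCDF β (s j + s k) x := fun hjk =>
    (hindep.indepFun hjk).measureReal_max_le_of_gumbelCDF (hF _) (hF _)
  have hwin : ∀ {i j k}, i ≠ j → i ≠ k → j ≠ k →
      volume.real {ω | max (Z j ω) (Z k ω) ≤ Z i ω} = s i / (s i + (s j + s k)) ∧
      volume.real {ω | max (Z j ω) (Z k ω) < Z i ω} = s i / (s i + (s j + s k)) := by
    intro i j k hij hik hjk
    have h := hindep.indepFun_max hmeas hij hik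
    have hmk := (hmeas j).max (hmeas k)
    have hsum := add_pos (hspos j) (hspos k)
    exact ⟨h.measureReal_le_of_gumbelCDF hβ (hspos i) hsum (hmeas i) hmk (hF i) (hmax hjk),
      h.measureReal_lt_of_gumbelCDF hβ (hspos i) hsum (hmeas i) hmk (hF i) (hmax hjk)⟩
  have hpair : volume.real {ω | Z 2 ω < Z 1 ω} = s 1 / (s 1 + s 2) :=
    (hindep.indepFun (by decide)).measureReal_lt_of_gumbelCDF hβ (hspos 1) (hspos 2) (hmeas 1)
      (hmeas 2) (hF 1) (hF 2)
  have hfirst := (hwin (i := 0) (j := 1) (k := 2) (by decide) (by decide) (by decide)).2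
  have hsecond := hwin (i := 1) (j := 0) (k := 2) (by decide) (by decide) (by decide)
  have hrank : volume.real {ω | Z 1 ω < Z 0 ω ∧ Z 2 ω < Z 1 ω} =
      s 1 / (s 1 + s 2) - s 1 / (s 1 + (s 0 + s 2)) := by
    rw [measureReal_lt_and_lt_eq_sub (hmeas 1) (hmeas 0) (hmeas 2)
      (hsecond.1.trans hsecond.2.symm), hpair, hsecond.2]
  simp only [← measureReal_def, gt_iff_lt, hrank, hfirst, hpair]
  have := hspos 0; have := hspos 1; have := hspos 2
  constructor <;> field_simp <;> ring
end
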